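/- arXiv:1501.00597 — 2 statements merged into one kernel-verified Lean document; each statement's English description precedes it below -/
import Mathlib

section
/- Monotone convergence for natural density: let (Aₙ) be a sequence of density sets with Aₙ ⪯_𝒩 A_{n+1} for every n. Then there exists a density set A such that: Aₙ ⪯_𝒩 A for every n; d(A) = sup_n d(Aₙ) = lim_n d(Aₙ); and A ⪯_𝒩 B for every density set B satisfying Aₙ ⪯_𝒩 B for all n. In other words, every ⪯_𝒩-increasing sequence in 𝒟/~ has a least upper bound in 𝒟/~, and the density of this least upper bound equals the supremum of the densities. -/
/-- The counting sequence `n ↦ |A ∩ {1,…,n}| / n` of a set of natural numbers. -/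
noncomputable def densSeq (A : Set ℕ) (n : ℕ) : ℝ :=
  (Nat.card ↥(A ∩ Set.Icc 1 n) : ℝ) / (n : ℝ)

/-- `A` has natural density `a`. -/
def HasDens (A : Set ℕ) (a : ℝ) : Prop :=
  Filter.Tendsto (densSeq A) Filter.atTop (nhds a)

/-- `A` is a density set, i.e. its natural density exists. -/
def IsDensitySet (A : Set ℕ) : Prop := ∃ a, HasDens A a

/-- `A` is a null density set. -/
def NullDens (A : Set ℕ) : Prop := HasDens A 0

/-- The relation `A ⪯_𝒩 B`: there is a null density set `N` with `A ⊆ B ∪ N`. -/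
def DensLE (A B : Set ℕ) : Prop := ∃ N, NullDens N ∧ A ⊆ B ∪ N


/-
A `⪯_𝒩`-chain can be replaced by the ⊆-chain of its partial unions without changing the densities,
so assume `A₀ ⊆ A₁ ⊆ ⋯` with densities `aₖ → s`. Choose strictly increasing thresholds `mₖ` beyond
which the counting sequence of `Aₖ` stays below `aₖ + 1/(k+1)`, and let `B = ⋃ₖ Aₖ ∩ (mₖ, ∞)`.
Each `Aₖ` lies in `B` up to the finite set `[0, mₖ]`, which bounds the density of `B` from below by
every `aₖ`; for `mₖ < n ≤ mₖ₊₁` we have `B ∩ [1, n] ⊆ Aₖ`, which bounds it from above. Finally, if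
`Aₖ ⪯_𝒩 C` for all `k`, then `B \ C` is covered by `B \ Aₖ`, of density `s - aₖ`, up to a null set.
-/

open Filter Set Topology

lemma densSeq_le_of_inter_subset {A B : Set ℕ} {n : ℕ} (h : A ∩ Icc 1 n ⊆ B) :
    densSeq A n ≤ densSeq B n := by
  unfold densSeq
  gcongr
  exact Nat.card_mono ((finite_Icc 1 n).inter_of_right B) (subset_inter h inter_subset_right)

lemma densSeq_mono {A B : Set ℕ} (h : A ⊆ B) (n : ℕ) : densSeq A n ≤ densSeq B n :=
  densSeq_le_of_inter_subset (inter_subset_left.trans h)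

lemma densSeq_nonneg (A : Set ℕ) (n : ℕ) : 0 ≤ densSeq A n := by
  unfold densSeq
  positivity

lemma densSeq_le_one (A : Set ℕ) (n : ℕ) : densSeq A n ≤ 1 := by
  refine div_le_one_of_le₀ ?_ n.cast_nonneg
  exact_mod_cast (Nat.card_mono (finite_Icc 1 n) inter_subset_right).trans_eq (by simp)

lemma densSeq_union_le (A B : Set ℕ) (n : ℕ) :
    densSeq (A ∪ B) n ≤ densSeq A n + densSeq B n := by
  unfold densSeq
  rw [← add_div, union_inter_distrib_right]
  gcongr
  exact_mod_cast ncard_union_le _ _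

lemma densSeq_le_add_of_subset_union {A B N : Set ℕ} (h : A ⊆ B ∪ N) (n : ℕ) :
    densSeq A n ≤ densSeq B n + densSeq N n :=
  (densSeq_mono h n).trans (densSeq_union_le B N n)

lemma densSeq_sdiff_add {B X : Set ℕ} (h : X ⊆ B) (n : ℕ) :
    densSeq (B \ X) n + densSeq X n = densSeq B n := by
  unfold densSeq
  rw [← add_div, inter_sdiff_distrib_right]
  congr 1
  exact_mod_cast ncard_sdiff_add_ncard_of_subset (inter_subset_inter_left _ h)
    ((finite_Icc 1 n).inter_of_right B)

lemma densSeq_le_ncard_div {N : Set ℕ} (hN : N.Finite) (n : ℕ) :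
    densSeq N n ≤ N.ncard / n := by
  unfold densSeq
  gcongr
  exact ncard_le_ncard inter_subset_left hN

section Density

variable {A B C N : Set ℕ} {x y : ℝ}

lemma HasDens.le_one (h : HasDens A x) : x ≤ 1 :=
  le_of_tendsto' h (densSeq_le_one A)

lemma NullDens.mono (hN : NullDens N) (h : A ⊆ N) : NullDens A :=
  squeeze_zero (densSeq_nonneg A) (densSeq_mono h) hN

lemma NullDens.union {M : Set ℕ} (hN : NullDens N) (hM : NullDens M) : NullDens (N ∪ M) :=
  squeeze_zero (densSeq_nonneg _) (densSeq_union_le N M) (by simpa using hN.add hM)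

lemma nullDens_of_finite (hN : N.Finite) : NullDens N :=
  squeeze_zero (densSeq_nonneg N) (densSeq_le_ncard_div hN)
    (tendsto_const_div_atTop_nhds_zero_nat _)

lemma densLE_iff_nullDens_sdiff : DensLE A B ↔ NullDens (A \ B) :=
  ⟨fun ⟨_, hN, h⟩ => hN.mono fun _ hx => (h hx.1).resolve_left hx.2,
    fun h => ⟨A \ B, h, fun _ hx => or_iff_not_imp_left.2 fun hxB => ⟨hx, hxB⟩⟩⟩

lemma densLE_of_subset (h : A ⊆ B) : DensLE A B :=
  densLE_iff_nullDens_sdiff.2 <| by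
    simpa [sdiff_eq_empty.2 h] using nullDens_of_finite finite_empty

lemma DensLE.trans (h₁ : DensLE A B) (h₂ : DensLE B C) : DensLE A C := by
  rw [densLE_iff_nullDens_sdiff] at *
  exact (h₁.union h₂).mono fun x hx => by by_cases hxB : x ∈ B <;> simp_all

lemma DensLE.union (h₁ : DensLE A C) (h₂ : DensLE B C) : DensLE (A ∪ B) C := by
  rw [densLE_iff_nullDens_sdiff, union_sdiff_distrib] at *
  exact h₁.union h₂

lemma densLE_accumulate {A : ℕ → Set ℕ} {k : ℕ} (h : ∀ i ≤ k, DensLE (A i) C) :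
    DensLE (accumulate A k) C := by
  induction k with
  | zero => simpa using h 0 le_rfl
  | succ k ih =>
    rw [accumulate_succ]
    exact (ih fun i hi => h i (hi.trans k.le_succ)).union (h (k + 1) le_rfl)

lemma densLE_of_le_of_densLE_succ {A : ℕ → Set ℕ} (h : ∀ n, DensLE (A n) (A (n + 1)))
    {i k : ℕ} (hik : i ≤ k) : DensLE (A i) (A k) := by
  induction k, hik using Nat.le_induction with
  | base => exact densLE_of_subset subset_rfl
  | succ k _ ih => exact ih.trans (h k)

lemma HasDens.le_of_densLE (hA : HasDens A x) (hB : HasDens B y) (h : DensLE A B) : x ≤ y := by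
  obtain ⟨N, hN, hAB⟩ := h
  simpa using le_of_tendsto_of_tendsto' hA (hB.add hN) (densSeq_le_add_of_subset_union hAB)

lemma HasDens.congr_densLE (hA : HasDens A x) (h₁ : DensLE A B) (h₂ : DensLE B A) :
    HasDens B x := by
  obtain ⟨N₁, hN₁, hAB⟩ := h₁
  obtain ⟨N₂, hN₂, hBA⟩ := h₂
  refine tendsto_of_tendsto_of_tendsto_of_le_of_le (by simpa using hA.sub hN₁)
    (by simpa using hA.add hN₂) (fun n => ?_) (densSeq_le_add_of_subset_union hBA)
  exact sub_le_iff_le_add.2 (densSeq_le_add_of_subset_union hAB n)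

lemma HasDens.inter_of_densLE (hA : HasDens A x) (h : DensLE A B) : HasDens (A ∩ B) x :=
  hA.congr_densLE (densLE_iff_nullDens_sdiff.2 <| by
    simpa using (densLE_iff_nullDens_sdiff.1 h)) (densLE_of_subset inter_subset_left)

lemma HasDens.sdiff (hB : HasDens B y) (hA : HasDens A x) (h : A ⊆ B) : HasDens (B \ A) (y - x) :=
  (hB.sub hA).congr fun n => (eq_sub_of_add_eq (densSeq_sdiff_add h n)).symm

lemma nullDens_of_forall_densLE (h : ∀ ε > 0, ∃ B y, DensLE A B ∧ HasDens B y ∧ y < ε) :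
    NullDens A := by
  refine tendsto_order.2 ⟨fun b hb => Eventually.of_forall fun n =>
    hb.trans_le (densSeq_nonneg A n), fun ε hε => ?_⟩
  obtain ⟨B, y, ⟨N, hN, hAB⟩, hB, hy⟩ := h ε hε
  filter_upwards [(hB.add hN).eventually (gt_mem_nhds (by simpa using hy))] with n hn
  exact (densSeq_le_add_of_subset_union hAB n).trans_lt hn

end Density

lemma StrictMono.exists_mem_Ioc {m : ℕ → ℕ} (hm : StrictMono m) {K n : ℕ} (h : m K < n) :
    ∃ k, K ≤ k ∧ n ∈ Ioc (m k) (m (k + 1)) := by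
  classical
  have hex : ∃ k, n ≤ m k := ⟨n, hm.id_le n⟩
  have hK : K < Nat.find hex := by
    by_contra! hle
    exact (Nat.find_spec hex).not_gt ((hm.monotone hle).trans_lt h)
  obtain ⟨k, hk⟩ := Nat.exists_eq_add_of_lt hK
  refine ⟨K + k, le_self_add, ?_, ?_⟩
  · exact not_le.1 (Nat.find_min hex (by omega))
  · simpa [hk] using Nat.find_spec hex

lemma eventually_lt_of_forall_mem_Ioc_le {α : Type*} [LinearOrder α] [TopologicalSpace α]
    [OrderTopology α] {f u : ℕ → α} {m : ℕ → ℕ} {s b : α} (hm : StrictMono m)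
    (hu : Tendsto u atTop (𝓝 s)) (hf : ∀ k, ∀ n ∈ Ioc (m k) (m (k + 1)), f n ≤ u k)
    (hb : s < b) : ∀ᶠ n in atTop, f n < b := by
  obtain ⟨K, hK⟩ := eventually_atTop.1 (hu.eventually (gt_mem_nhds hb))
  filter_upwards [eventually_gt_atTop (m K)] with n hn
  obtain ⟨k, hKk, hnk⟩ := hm.exists_mem_Ioc hn
  exact (hf k n hnk).trans_lt (hK k hKk)

theorem exists_hasDens_forall_densLE_of_monotone {A : ℕ → Set ℕ} {a : ℕ → ℝ} {s : ℝ}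
    (hmono : Monotone A) (hA : ∀ k, HasDens (A k) (a k)) (ha : Tendsto a atTop (𝓝 s)) :
    ∃ B, HasDens B s ∧ ∀ k, DensLE (A k) B := by
  obtain ⟨m, hm, hmA⟩ := extraction_forall_of_eventually fun k =>
    eventually_forall_ge_atTop.2 <|
      (hA k).eventually (gt_mem_nhds (lt_add_of_pos_right (a k) Nat.one_div_pos_of_nat))
  set B := ⋃ k, A k ∩ Ioi (m k)
  have hAB (k : ℕ) : DensLE (A k) B :=
    ⟨Iic (m k), nullDens_of_finite (finite_Iic _), fun x hx =>
      (le_or_gt x (m k)).elim Or.inr fun hlt => Or.inl (mem_iUnion.2 ⟨k, hx, hlt⟩)⟩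
  refine ⟨B, tendsto_order.2 ⟨fun b hb => ?_, fun b hb => ?_⟩, hAB⟩
  · obtain ⟨j, hj⟩ := (ha.eventually (lt_mem_nhds hb)).exists
    filter_upwards [((hA j).inter_of_densLE (hAB j)).eventually (lt_mem_nhds hj)] with n hn
    exact hn.trans_le (densSeq_mono inter_subset_right n)
  · refine eventually_lt_of_forall_mem_Ioc_le hm (ha.add tendsto_one_div_add_atTop_nhds_zero_nat)
      (fun k n hn => ?_) (by simpa using hb)
    refine (densSeq_le_of_inter_subset ?_).trans (hmA k n hn.1.le).le
    rintro x ⟨hxB, -, hxn⟩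
    obtain ⟨i, hxi, hix⟩ := mem_iUnion.1 hxB
    exact hmono (Nat.lt_succ_iff.1 (hm.lt_iff_lt.1 (hix.trans_le (hxn.trans hn.2)))) hxi

theorem densLE_of_tendsto {A : ℕ → Set ℕ} {a : ℕ → ℝ} {B C : Set ℕ} {s : ℝ}
    (hB : HasDens B s) (hA : ∀ k, HasDens (A k) (a k)) (ha : Tendsto a atTop (𝓝 s))
    (hAB : ∀ k, DensLE (A k) B) (hAC : ∀ k, DensLE (A k) C) : DensLE B C := by
  rw [densLE_iff_nullDens_sdiff]
  refine nullDens_of_forall_densLE fun ε hε => ?_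
  obtain ⟨j, hj⟩ := (ha.eventually (lt_mem_nhds (sub_lt_self s hε))).exists
  refine ⟨B \ A j, s - a j, ?_, ?_, by linarith⟩
  · rw [densLE_iff_nullDens_sdiff]
    exact (densLE_iff_nullDens_sdiff.1 (hAC j)).mono
      fun x ⟨⟨hxB, hxC⟩, hx⟩ => ⟨not_not.1 fun hxA => hx ⟨hxB, hxA⟩, hxC⟩
  · rw [← sdiff_inter_self_eq_sdiff]
    exact hB.sdiff ((hA j).inter_of_densLE (hAB j)) inter_subset_right

/-- Monotone convergence for natural density: if `(Aₙ)` is a sequence of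
density sets with `Aₙ ⪯_𝒩 A_{n+1}` for every `n`, then there is a density set `A` which is
a `⪯_𝒩`-least upper bound of the `Aₙ` among density sets, and
`d(A) = sup_n d(Aₙ) = lim_n d(Aₙ)`. -/
theorem density_monotone_convergence (A : ℕ → Set ℕ) (a : ℕ → ℝ)
    (hA : ∀ n, HasDens (A n) (a n))
    (hmono : ∀ n, DensLE (A n) (A (n + 1))) :
    ∃ B : Set ℕ,
      HasDens B (⨆ n, a n) ∧
      Filter.Tendsto a Filter.atTop (nhds (⨆ n, a n)) ∧
      (∀ n, DensLE (A n) B) ∧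
      (∀ C : Set ℕ, IsDensitySet C → (∀ n, DensLE (A n) C) → DensLE B C) := by
  have hacc (k : ℕ) : HasDens (accumulate A k) (a k) :=
    (hA k).congr_densLE (densLE_of_subset subset_accumulate)
      (densLE_accumulate fun _ hi => densLE_of_le_of_densLE_succ hmono hi)
  have ha_mono : Monotone a :=
    monotone_nat_of_le_succ fun n => (hA n).le_of_densLE (hA (n + 1)) (hmono n)
  have ha : Tendsto a atTop (𝓝 (⨆ n, a n)) :=
    tendsto_atTop_ciSup ha_mono ⟨1, forall_mem_range.2 fun n => (hA n).le_one⟩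
  obtain ⟨B, hB, haccB⟩ := exists_hasDens_forall_densLE_of_monotone monotone_accumulate hacc ha
  exact ⟨B, hB, ha, fun n => (densLE_of_subset subset_accumulate).trans (haccB n),
    fun C _ hAC => densLE_of_tendsto hB hacc ha haccB fun k => densLE_accumulate fun i _ => hAC i⟩
end

section
/- Let (Ω, Σ) be a measurable space, and let L = Σ be the lattice of measurable sets (ordered by inclusion, with ∧ = ∩, ∨ = ∪, 𝟬 = ∅, 𝟭 = Ω), and X = c₀₀(Σ)/Δ the associated quotient space. Then there is a linear isomorphism from X onto the space 𝒮 of simple functions on (Ω, Σ) (the linear span of indicator functions 1_A of measurable sets A inside the functions Ω → ℝ), determined by 1 ⊗ A ↦ 1_A; equivalently, the map ∑ᵢ aᵢ 1_{Aᵢ} ↦ ∑ᵢ aᵢ ⊗ Aᵢ is a well-defined linear bijection 𝒮 → X. -/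
/-!
The linear map `c₀₀(Σ) → (Ω → ℝ)`, `e_A ↦ 1_A`, has range `𝒮` and kills `Δ`, since
`1_A + 1_B = 1_{A∪B} + 1_{A∩B}` and `1_∅ = 0`. Conversely, let `∑_{A ∈ s} c_A 1_A = 0` for a
finite family `s`, and cut `Ω` into the atoms `⋂_{A ∈ t} A ∩ ⋂_{A ∈ s \ t} Aᶜ`, `t ⊆ s`. Modulo
`Δ`, each `e_A` is the sum of the `e_atom` over the atoms inside `A`, so
`∑ c_A e_A ≡ ∑_t (∑_{A ∈ t} c_A) e_{atom t}`. Each coefficient `∑_{A ∈ t} c_A` is the value of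
`∑ c_A 1_A = 0` at a point of its atom, unless that atom is empty, in which case `e_∅ ∈ Δ`.
So the kernel is exactly `Δ`.
-/

/-- The subspace `Δ ⊆ c₀₀(L)` spanned by `e_𝟬` and the vectors
`(e_A + e_B) − (e_{A∨B} + e_{A∧B})`. -/
noncomputable def deltaSpan (L : Type*) [Lattice L] [BoundedOrder L] :
    Submodule ℝ (L →₀ ℝ) :=
  Submodule.span ℝ
    ({Finsupp.single (⊥ : L) (1 : ℝ)} ∪
      {f : L →₀ ℝ | ∃ A B : L,
        f = Finsupp.single A 1 + Finsupp.single B 1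
          - (Finsupp.single (A ⊔ B) 1 + Finsupp.single (A ⊓ B) 1)})

/-- The quotient space `X = c₀₀(L)/Δ`. -/
abbrev XSpace (L : Type*) [Lattice L] [BoundedOrder L] :=
  (L →₀ ℝ) ⧸ deltaSpan L

/-- The element `a ⊗ A := q(a·e_A)` of `X`. -/
noncomputable def tens (L : Type*) [Lattice L] [BoundedOrder L] (a : ℝ) (A : L) :
    XSpace L :=
  Submodule.Quotient.mk (Finsupp.single A a)

open Finsupp

section Lattice

variable {L : Type*} [Lattice L] [BoundedOrder L]

lemma smul_tens (c a : ℝ) (A : L) : c • tens L a A = tens L (c * a) A := by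
  rw [tens, tens, ← Submodule.Quotient.mk_smul, smul_single, smul_eq_mul]

lemma tens_bot (a : ℝ) : tens L a ⊥ = 0 := by
  have h : tens L 1 ⊥ = 0 := (Submodule.Quotient.mk_eq_zero _).mpr
    (Submodule.subset_span (Or.inl rfl))
  rw [← mul_one a, ← smul_tens, h, smul_zero]

lemma tens_one_add_tens_one (A B : L) :
    tens L 1 A + tens L 1 B = tens L 1 (A ⊔ B) + tens L 1 (A ⊓ B) := by
  simp only [tens, ← Submodule.Quotient.mk_add]
  exact (Submodule.Quotient.eq _).mpr (Submodule.subset_span (Or.inr ⟨A, B, rfl⟩))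

lemma tens_one_sup_of_disjoint {A B : L} (h : Disjoint A B) :
    tens L 1 (A ⊔ B) = tens L 1 A + tens L 1 B := by
  rw [tens_one_add_tens_one, h.eq_bot, tens_bot, add_zero]

lemma mk_eq_sum_tens (f : L →₀ ℝ) :
    (Submodule.Quotient.mk f : XSpace L) = f.sum fun A a => tens L a A := by
  conv_lhs => rw [← f.sum_single]
  exact map_finsuppSum (deltaSpan L).mkQ f _

end Lattice

section DistribLattice

variable {L : Type*} [DistribLattice L] [BoundedOrder L]

lemma tens_one_finset_sup {ι : Type*} {s : Finset ι} {B : ι → L}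
    (h : (s : Set ι).PairwiseDisjoint B) :
    tens L 1 (s.sup B) = ∑ i ∈ s, tens L 1 (B i) := by
  induction s using Finset.cons_induction with
  | empty => exact tens_bot 1
  | cons i s hi ih =>
    rw [Finset.coe_cons] at h
    rw [Finset.sup_cons, Finset.sum_cons, tens_one_sup_of_disjoint,
      ih (h.subset (Set.subset_insert _ _))]
    exact Finset.disjoint_sup_right.mpr fun j hj =>
      h (Set.mem_insert _ _) (Set.mem_insert_of_mem _ hj) (ne_of_mem_of_not_mem hj hi).symm

end DistribLattice

section Atoms

open scoped Classical

variable {Ω : Type*} [MeasurableSpace Ω]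

local notation "MSet" => {s : Set Ω // MeasurableSet s}

lemma MeasurableSet.coe_finset_inf {ι : Type*} (t : Finset ι) (g : ι → MSet) :
    ((t.inf g : MSet) : Set Ω) = ⋂ i ∈ t, (g i : Set Ω) := by
  induction t using Finset.cons_induction with
  | empty => simp [MeasurableSet.coe_top]
  | cons i t hi ih => simp [MeasurableSet.inf_eq_inter, MeasurableSet.coe_inter, ih]

noncomputable def atomOf (s t : Finset MSet) : MSet :=
  t.inf id ⊓ (s \ t).inf compl

lemma mem_atomOf_iff {s t : Finset MSet} (ht : t ⊆ s) {ω : Ω} :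
    ω ∈ (atomOf s t : Set Ω) ↔ t = s.filter (fun B : MSet => ω ∈ (B : Set Ω)) := by
  simp only [atomOf, MeasurableSet.inf_eq_inter, MeasurableSet.coe_inter, Set.mem_inter_iff,
    MeasurableSet.coe_finset_inf, Set.mem_iInter, id, MeasurableSet.coe_compl,
    Set.mem_compl_iff, Finset.mem_sdiff, Finset.ext_iff, Finset.mem_filter]
  constructor
  · rintro ⟨hin, hout⟩ B
    exact ⟨fun hB => ⟨ht hB, hin B hB⟩,
      fun ⟨hBs, hωB⟩ => by_contra fun hB => hout B ⟨hBs, hB⟩ hωB⟩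
  · intro h
    exact ⟨fun B hB => ((h B).mp hB).2, fun B ⟨hBs, hBt⟩ hωB => hBt ((h B).mpr ⟨hBs, hωB⟩)⟩

lemma atomOf_pairwiseDisjoint (s : Finset MSet) :
    (s.powerset : Set (Finset MSet)).PairwiseDisjoint (atomOf s) := by
  intro t ht t' ht' hne
  rw [Function.onFun, _root_.disjoint_iff, ← Subtype.coe_inj, MeasurableSet.inf_eq_inter,
    MeasurableSet.coe_inter, MeasurableSet.coe_bot, Set.bot_eq_empty,
    Set.eq_empty_iff_forall_notMem]
  rintro ω ⟨hω, hω'⟩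
  exact hne (((mem_atomOf_iff (Finset.mem_powerset.mp ht)).mp hω).trans
    ((mem_atomOf_iff (Finset.mem_powerset.mp ht')).mp hω').symm)

lemma finset_sup_atomOf {s : Finset MSet} {A : MSet} (hA : A ∈ s) :
    (s.powerset.filter (A ∈ ·)).sup (atomOf s) = A := by
  refine le_antisymm (Finset.sup_le fun t ht => ?_) fun ω hω => ?_
  · exact inf_le_left.trans (Finset.inf_le (Finset.mem_filter.mp ht).2)
  · have ht : s.filter (fun B : MSet => ω ∈ (B : Set Ω)) ∈ s.powerset.filter (A ∈ ·) :=
      Finset.mem_filter.mpr ⟨Finset.mem_powerset.mpr (Finset.filter_subset _ _),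
        Finset.mem_filter.mpr ⟨hA, hω⟩⟩
    exact Set.mem_of_subset_of_mem (Finset.le_sup (f := atomOf s) ht)
      ((mem_atomOf_iff (Finset.filter_subset _ _)).mpr rfl)

lemma sum_smul_indicator_apply_of_mem_atomOf {s t : Finset MSet} (ht : t ⊆ s) (c : MSet → ℝ)
    {ω : Ω} (hω : ω ∈ (atomOf s t : Set Ω)) :
    (∑ A ∈ s, c A • (A : Set Ω).indicator (fun _ => (1 : ℝ))) ω = ∑ A ∈ t, c A := by
  rw [(mem_atomOf_iff ht).mp hω, Finset.sum_filter]
  simp [Set.indicator_apply]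

lemma tens_one_eq_sum_atomOf {s : Finset MSet} {A : MSet} (hA : A ∈ s) :
    tens MSet 1 A = ∑ t ∈ s.powerset.filter (A ∈ ·), tens MSet 1 (atomOf s t) := by
  conv_lhs => rw [← finset_sup_atomOf hA]
  exact tens_one_finset_sup ((atomOf_pairwiseDisjoint s).subset
    (Finset.coe_subset.mpr (Finset.filter_subset _ _)))

lemma sum_tens_eq_zero_of_sum_smul_indicator_eq_zero (s : Finset MSet) (c : MSet → ℝ)
    (h : ∑ A ∈ s, c A • (A : Set Ω).indicator (fun _ => (1 : ℝ)) = 0) :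
    ∑ A ∈ s, tens MSet (c A) A = 0 := by
  have hatom : ∀ t ∈ s.powerset, (∑ A ∈ t, c A) • tens MSet 1 (atomOf s t) = 0 := by
    intro t ht
    rcases Set.eq_empty_or_nonempty (atomOf s t : Set Ω) with hempty | ⟨ω, hω⟩
    · rw [show atomOf s t = ⊥ from Subtype.ext hempty, tens_bot, smul_zero]
    · rw [← sum_smul_indicator_apply_of_mem_atomOf (Finset.mem_powerset.mp ht) c hω, h,
        Pi.zero_apply, zero_smul]
  calc ∑ A ∈ s, tens MSet (c A) A
      = ∑ A ∈ s, ∑ t ∈ s.powerset.filter (A ∈ ·), c A • tens MSet 1 (atomOf s t) :=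
        Finset.sum_congr rfl fun A hA => by
          rw [← Finset.smul_sum, ← tens_one_eq_sum_atomOf hA, smul_tens, mul_one]
    _ = ∑ t ∈ s.powerset, ∑ A ∈ t, c A • tens MSet 1 (atomOf s t) := by
        refine Finset.sum_comm' fun A t => ?_
        simp only [Finset.mem_filter, Finset.mem_powerset]
        exact ⟨fun ⟨_, hts, hA⟩ => ⟨hA, hts⟩, fun ⟨hA, hts⟩ => ⟨hts hA, hts, hA⟩⟩
    _ = 0 := Finset.sum_eq_zero fun t ht => by rw [← Finset.sum_smul, hatom t ht]

end Atoms

section SimpleFunctions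

variable (Ω : Type*) [MeasurableSpace Ω]

local notation "MSet" => {s : Set Ω // MeasurableSet s}

noncomputable def indicatorCombination : (MSet →₀ ℝ) →ₗ[ℝ] (Ω → ℝ) :=
  linearCombination ℝ fun A : MSet => (A : Set Ω).indicator (fun _ => (1 : ℝ))

lemma ker_indicatorCombination : LinearMap.ker (indicatorCombination Ω) = deltaSpan MSet := by
  refine le_antisymm (fun f hf => ?_) (Submodule.span_le.mpr ?_)
  · rw [LinearMap.mem_ker, indicatorCombination, linearCombination_apply] at hf
    rw [← Submodule.Quotient.mk_eq_zero, mk_eq_sum_tens]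
    exact sum_tens_eq_zero_of_sum_smul_indicator_eq_zero _ _ hf
  · rintro f (rfl | ⟨A, B, rfl⟩)
    · simp [indicatorCombination, MeasurableSet.coe_bot, Pi.zero_def]
    · simp [indicatorCombination, MeasurableSet.sup_eq_union, MeasurableSet.inf_eq_inter,
        Set.indicator_union_add_inter]

lemma range_indicatorCombination :
    LinearMap.range (indicatorCombination Ω) = Submodule.span ℝ
      {f : Ω → ℝ | ∃ s : Set Ω, MeasurableSet s ∧ f = s.indicator (fun _ => (1 : ℝ))} := by
  rw [indicatorCombination, range_linearCombination]
  congr 1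
  ext f
  exact ⟨fun ⟨A, hA⟩ => ⟨A, A.2, hA.symm⟩, fun ⟨s, hs, hf⟩ => ⟨⟨s, hs⟩, hf.symm⟩⟩

end SimpleFunctions

/-- For a measurable space `(Ω, Σ)` and `L = Σ` the bounded lattice of
measurable sets, the quotient space `X = c₀₀(Σ)/Δ` is linearly isomorphic to the space
`𝒮` of simple functions (the span of indicators of measurable sets), via the linear
isomorphism determined by `1 ⊗ A ↦ 1_A`. -/
theorem xSpace_equiv_simpleFunctions (Ω : Type*) [MeasurableSpace Ω] :
    ∃ T : XSpace {s : Set Ω // MeasurableSet s} ≃ₗ[ℝ]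
        ↥(Submodule.span ℝ
          {f : Ω → ℝ | ∃ s : Set Ω, MeasurableSet s ∧
            f = s.indicator (fun _ => (1 : ℝ))}),
      ∀ A : {s : Set Ω // MeasurableSet s},
        ((T (tens {s : Set Ω // MeasurableSet s} 1 A) : Ω → ℝ))
          = (A : Set Ω).indicator (fun _ => (1 : ℝ)) := by
  refine ⟨(Submodule.quotEquivOfEq _ _ (ker_indicatorCombination Ω).symm).trans
    ((indicatorCombination Ω).quotKerEquivRange.trans
      (LinearEquiv.ofEq _ _ (range_indicatorCombination Ω))), fun A => ?_⟩
  rw [LinearEquiv.trans_apply, LinearEquiv.trans_apply, tens, Submodule.quotEquivOfEq_mk,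
    LinearEquiv.coe_ofEq_apply, LinearMap.quotKerEquivRange_apply_mk, indicatorCombination,
    linearCombination_single, one_smul]
end
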